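/- arXiv:2405.02475 — 4 statements merged into one kernel-verified Lean document; each statement's English description precedes it below -/
import Mathlib

section
/- (Lemma 1, logistic/sigmoid case.) Let X ∈ ℝ^{n×p} have full column rank and let ŷ ∈ ℝⁿ be arbitrary predictions. Define the corrected predictions ŷ^c = P_X^⊥ ŷ + (1/2)·1_n, where 1/2 = σ(0) is the sigmoid function evaluated at 0. Then β = 0 is the unique global minimizer over ℝᵖ of the logistic evaluation objective L_{X,ŷ^c}(β) = Σᵢ [log(1 + exp(xᵢᵀβ)) − ŷᵢ^c xᵢᵀβ]; i.e., the evaluation model regressing ŷ^c on X with sigmoid activation yields β̂^c = 0. -/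
open Matrix

lemma two_le_exp_add_exp_neg (s : ℝ) : 2 ≤ Real.exp s + Real.exp (-s) := by
  have h1 : Real.exp s * Real.exp (-s) = 1 := by
    rw [← Real.exp_add]; simp
  nlinarith [sq_nonneg (Real.exp s - 1), Real.exp_pos s, Real.exp_pos (-s)]

lemma two_lt_exp_add_exp_neg {s : ℝ} (hs : s ≠ 0) :
    2 < Real.exp s + Real.exp (-s) := by
  have h1 : Real.exp s * Real.exp (-s) = 1 := by
    rw [← Real.exp_add]; simp
  have h2 : Real.exp s ≠ 1 := by
    intro h
    exact hs (by simpa using Real.exp_injective (by simpa [Real.exp_zero] using h))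
  have h3 : (Real.exp s - 1)^2 > 0 :=
    pow_two_pos_of_ne_zero (sub_ne_zero.mpr h2)
  nlinarith [Real.exp_pos s, Real.exp_pos (-s)]

lemma split_exp (t : ℝ) :
    1 + Real.exp t = Real.exp (t/2) * (Real.exp (-(t/2)) + Real.exp (t/2)) := by
  have h1 : Real.exp (t/2) * Real.exp (-(t/2)) = 1 := by
    rw [← Real.exp_add]; simp
  have h2 : Real.exp (t/2) * Real.exp (t/2) = Real.exp t := by
    rw [← Real.exp_add]; norm_num
  rw [mul_add, h1, h2]

lemma key_le (t : ℝ) : Real.log 2 + t/2 ≤ Real.log (1 + Real.exp t) := by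
  rw [split_exp t, Real.log_mul (Real.exp_ne_zero _) (by positivity),
    Real.log_exp]
  have := Real.log_le_log (by norm_num : (0:ℝ) < 2)
    (by linarith [two_le_exp_add_exp_neg (t/2)] :
      (2:ℝ) ≤ Real.exp (-(t/2)) + Real.exp (t/2))
  linarith

lemma key_lt {t : ℝ} (ht : t ≠ 0) :
    Real.log 2 + t/2 < Real.log (1 + Real.exp t) := by
  rw [split_exp t, Real.log_mul (Real.exp_ne_zero _) (by positivity),
    Real.log_exp]
  have h : (2:ℝ) < Real.exp (-(t/2)) + Real.exp (t/2) := by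
    have := two_lt_exp_add_exp_neg (s := t/2) (by simpa using ht)
    linarith
  have := Real.log_lt_log (by norm_num : (0:ℝ) < 2) h
  linarith

/-- Lemma 1 (logistic/sigmoid case): with full-column-rank `X` and corrected
predictions `ŷ^c = P_X^⊥ ŷ + (1/2)·1`, the logistic evaluation objective
`β ↦ ∑ i, [log(1 + exp(xᵢᵀβ)) − ŷᵢ^c xᵢᵀβ]` has `β = 0` as its unique global
minimizer. -/
theorem lemma1_logistic
    (n p : ℕ) (X : Matrix (Fin n) (Fin p) ℝ) (yhat : Fin n → ℝ)
    (hX : IsUnit (Xᵀ * X))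
    (Pperp : Matrix (Fin n) (Fin n) ℝ)
    (hP : Pperp = 1 - X * (Xᵀ * X)⁻¹ * Xᵀ)
    (yc : Fin n → ℝ) (hyc : yc = Pperp.mulVec yhat + fun _ => (1 / 2 : ℝ))
    (L : (Fin p → ℝ) → ℝ)
    (hL : L = fun β => ∑ i, (Real.log (1 + Real.exp (X.mulVec β i)) - yc i * X.mulVec β i)) :
    ∀ β : Fin p → ℝ, β ≠ 0 → L 0 < L β := by
  intro β hβ
  have hdet : IsUnit (Xᵀ * X).det := (Matrix.isUnit_iff_isUnit_det _).mp hX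
  have hinv : (Xᵀ * X)⁻¹ * (Xᵀ * X) = 1 := Matrix.nonsing_inv_mul _ hdet
  set v : Fin n → ℝ := X.mulVec β with hv
  -- Pperp * X = 0
  have hPX : Pperp * X = 0 := by
    rw [hP, Matrix.sub_mul, Matrix.one_mul, Matrix.mul_assoc,
      Matrix.mul_assoc, hinv, Matrix.mul_one,
      sub_self]
  -- Pperp symmetric
  have hPsym : Pperpᵀ = Pperp := by
    have hinvsym : ((Xᵀ * X)⁻¹)ᵀ = (Xᵀ * X)⁻¹ := by
      rw [Matrix.transpose_nonsing_inv, Matrix.transpose_mul,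
        Matrix.transpose_transpose]
    rw [hP, Matrix.transpose_sub, Matrix.transpose_one, Matrix.transpose_mul,
      Matrix.transpose_mul, Matrix.transpose_transpose, hinvsym,
      Matrix.mul_assoc]
  -- Pperp v = 0
  have hPv : Pperp.mulVec v = 0 := by
    rw [hv, Matrix.mulVec_mulVec, hPX, Matrix.zero_mulVec]
  -- v ≠ 0
  have hvne : v ≠ 0 := by
    intro h0
    apply hβ
    have h1 : (Xᵀ * X).mulVec β = 0 := by
      rw [← Matrix.mulVec_mulVec, ← hv, h0, Matrix.mulVec_zero]
    have h2 : ((Xᵀ * X)⁻¹ * (Xᵀ * X)).mulVec β = 0 := by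
      rw [← Matrix.mulVec_mulVec, h1, Matrix.mulVec_zero]
    rwa [hinv, Matrix.one_mulVec] at h2
  obtain ⟨i0, hi0⟩ : ∃ i, v i ≠ 0 := by
    by_contra h
    push_neg at h
    exact hvne (funext h)
  -- dot product of corrected residual with v vanishes
  have hdot : (Pperp.mulVec yhat) ⬝ᵥ v = 0 := by
    calc (Pperp.mulVec yhat) ⬝ᵥ v = (Pperpᵀ.mulVec yhat) ⬝ᵥ v := by rw [hPsym]
      _ = (yhat ᵥ* Pperp) ⬝ᵥ v := by rw [Matrix.mulVec_transpose]
      _ = yhat ⬝ᵥ (Pperp.mulVec v) := (Matrix.dotProduct_mulVec _ _ _).symm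
      _ = 0 := by rw [hPv, dotProduct_zero]
  -- L β as a clean sum
  have hLβ : L β = ∑ i, (Real.log (1 + Real.exp (v i)) - v i / 2) := by
    rw [hL]
    simp only
    rw [← hv]
    have hsum : ∑ i, yc i * v i = ∑ i, v i / 2 := by
      rw [hyc]
      have hterm : ∀ i, ((Pperp.mulVec yhat + fun _ => (1/2:ℝ) : Fin n → ℝ)) i * v i
          = (Pperp.mulVec yhat) i * v i + v i / 2 := by
        intro i; simp only [Pi.add_apply]; ring
      simp only [hterm]
      rw [Finset.sum_add_distrib]
      have hz : ∑ i, (Pperp.mulVec yhat) i * v i = 0 := hdot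
      rw [hz, zero_add]
    rw [Finset.sum_sub_distrib, Finset.sum_sub_distrib, hsum]
  have hL0 : L 0 = ∑ _i : Fin n, Real.log 2 := by
    rw [hL]
    simp only [Matrix.mulVec_zero, Pi.zero_apply, mul_zero, sub_zero,
      Real.exp_zero]
    norm_num
  rw [hL0, hLβ]
  apply Finset.sum_lt_sum
  · intro i _
    have := key_le (v i)
    linarith
  · exact ⟨i0, Finset.mem_univ i0, by have := key_lt hi0; linarith⟩
end

section
/- (Lemma 1, Poisson/exponential case.) Let X ∈ ℝ^{n×p} have full column rank and let ŷ ∈ ℝⁿ be arbitrary predictions. Define the corrected predictions ŷ^c = P_X^⊥ ŷ + 1_n, where 1 = exp(0) is the exponential activation evaluated at 0. Then β = 0 is the unique global minimizer over ℝᵖ of the Poisson evaluation objective L_{X,ŷ^c}(β) = Σᵢ [exp(xᵢᵀβ) − ŷᵢ^c xᵢᵀβ]; i.e., the evaluation model regressing ŷ^c on X with exponential activation yields β̂^c = 0. -/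
open Matrix

/-- Lemma 1 (Poisson/exponential case): with full-column-rank `X` and corrected
predictions `ŷ^c = P_X^⊥ ŷ + 1`, the Poisson evaluation objective
`β ↦ ∑ i, [exp(xᵢᵀβ) − ŷᵢ^c xᵢᵀβ]` has `β = 0` as its unique global minimizer. -/
theorem lemma1_poisson
    (n p : ℕ) (X : Matrix (Fin n) (Fin p) ℝ) (yhat : Fin n → ℝ)
    (hX : IsUnit (Xᵀ * X))
    (Pperp : Matrix (Fin n) (Fin n) ℝ)
    (hP : Pperp = 1 - X * (Xᵀ * X)⁻¹ * Xᵀ)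
    (yc : Fin n → ℝ) (hyc : yc = Pperp.mulVec yhat + fun _ => (1 : ℝ))
    (L : (Fin p → ℝ) → ℝ)
    (hL : L = fun β => ∑ i, (Real.exp (X.mulVec β i) - yc i * X.mulVec β i)) :
    ∀ β : Fin p → ℝ, β ≠ 0 → L 0 < L β := by
  intro β hβ
  have hdet : IsUnit (Xᵀ * X).det := (Matrix.isUnit_iff_isUnit_det _).mp hX
  have hinv : (Xᵀ * X)⁻¹ * (Xᵀ * X) = 1 := Matrix.nonsing_inv_mul _ hdet
  have hPX : Pperp * X = 0 := by
    rw [hP, Matrix.sub_mul, Matrix.one_mul]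
    rw [Matrix.mul_assoc, Matrix.mul_assoc, hinv, Matrix.mul_one, sub_self]
  have hsym : Pperpᵀ = Pperp := by
    rw [hP]
    simp [Matrix.transpose_sub, Matrix.transpose_mul, Matrix.transpose_nonsing_inv,
      Matrix.mul_assoc]
  -- the vector a = Xβ
  set a : Fin n → ℝ := X.mulVec β with ha
  have hanz : a ≠ 0 := by
    intro h0
    apply hβ
    have h1 : (Xᵀ * X).mulVec β = 0 := by
      rw [← Matrix.mulVec_mulVec, ha] at *
      rw [h0, Matrix.mulVec_zero]
    have : ((Xᵀ * X)⁻¹ * (Xᵀ * X)).mulVec β = 0 := by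
      rw [← Matrix.mulVec_mulVec, h1, Matrix.mulVec_zero]
    rwa [hinv, Matrix.one_mulVec] at this
  obtain ⟨i0, hi0⟩ : ∃ i, a i ≠ 0 := by
    by_contra h
    push_neg at h
    exact hanz (funext h)
  -- key: ∑ yc i * a i = ∑ a i
  have hkey : ∑ i, yc i * a i = ∑ i, a i := by
    have hzero : Pperp.mulVec yhat ⬝ᵥ a = 0 := by
      have : Pperpᵀ.mulVec a = 0 := by
        rw [ha, Matrix.mulVec_mulVec, hsym, hPX, Matrix.zero_mulVec]
      calc Pperp.mulVec yhat ⬝ᵥ a = yhat ⬝ᵥ Pperpᵀ.mulVec a := by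
            rw [dotProduct_comm, Matrix.dotProduct_mulVec,
              Matrix.mulVec_transpose, dotProduct_comm]
        _ = 0 := by rw [this, dotProduct_zero]
    have : ∑ i, yc i * a i = yc ⬝ᵥ a := rfl
    rw [this, hyc, add_dotProduct, hzero, zero_add]
    simp [dotProduct]
  have hL0 : L 0 = ∑ _i : Fin n, (1 : ℝ) := by
    rw [hL]
    simp [Matrix.mulVec_zero]
  have hLβ : L β = ∑ i, (Real.exp (a i) - a i) := by
    rw [hL]
    simp only [← ha, Finset.sum_sub_distrib]
    rw [hkey]
  rw [hL0, hLβ]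
  apply Finset.sum_lt_sum
  · intro i _
    have := Real.add_one_le_exp (a i)
    linarith
  · refine ⟨i0, Finset.mem_univ _, ?_⟩
    have := Real.add_one_lt_exp hi0
    linarith
end

section
/- (Corollary 1, logistic case.) Let Z ∈ ℝ^{n×q}, X ∈ ℝ^{n×p}, and suppose the n×(p+1) matrix [1_n | X] obtained by prepending a column of ones to X has full column rank. Let γ^c ∈ ℝ^q satisfy the constraint ‖(X − n⁻¹ 1_n 1_nᵀ X)ᵀ σ(Zγ^c)‖₂² = 0, and set ŷ^c = σ(Zγ^c) (sigmoid applied entrywise), with mean ȳ^c = n⁻¹ Σᵢ ŷᵢ^c ∈ (0,1). Then the unique global minimizer (β̂₀, β̂) of the logistic evaluation objective with intercept, (β₀, β) ↦ Σᵢ [log(1 + exp(β₀ + xᵢᵀβ)) − ŷᵢ^c (β₀ + xᵢᵀβ)], satisfies β̂ = 0 (and β̂₀ = log(ȳ^c/(1−ȳ^c))); i.e., the constrained optimization produces corrected coefficients with β̂^c = 0. -/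
/-!
The softplus function `ℓ t = log (1 + exp t)` is strictly convex with `ℓ' = σ`. Hence the logistic
loss `θ ↦ ∑ᵢ ℓ((Aθ)ᵢ) - yᵢ (Aθ)ᵢ` lies strictly above its tangent plane at any solution `θ₀` of the
score equation `Aᵀ (y - σ(Aθ₀)) = 0`, off the kernel of `A`. For the design `A = [1 | X]` the
point `θ₀ = (logit ȳ, 0)` solves it: then `σ(Aθ₀) = ȳ 1`, the first score equation is
`∑ᵢ (yᵢ - ȳ) = 0`, and the others read `Xᵀ (y - ȳ 1) = X_cᵀ y = 0`, which is the constraint.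
-/

open Matrix Real Set

namespace Real

noncomputable def softplus (t : ℝ) : ℝ := log (1 + exp t)

theorem hasDerivAt_softplus (t : ℝ) : HasDerivAt softplus (sigmoid t) t := by
  unfold softplus
  convert ((hasDerivAt_exp t).const_add 1).log (by positivity) using 1
  rw [sigmoid_def, exp_neg]
  field_simp
  ring

theorem strictConvexOn_softplus : StrictConvexOn ℝ univ softplus := by
  apply StrictMonoOn.strictConvexOn_of_deriv convex_univ
  · exact fun t _ => (hasDerivAt_softplus t).continuousAt.continuousWithinAt
  · rw [funext fun t => (hasDerivAt_softplus t).deriv, interior_univ]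
    exact sigmoid_strictMono.strictMonoOn _

theorem sigmoid_log_div_one_sub {y : ℝ} (h0 : 0 < y) (h1 : y < 1) :
    sigmoid (log (y / (1 - y))) = y := by
  have h1' : 1 - y ≠ 0 := by linarith
  rw [sigmoid_def, exp_neg, exp_log (div_pos h0 (by linarith)), inv_div]
  field_simp
  ring

end Real

theorem StrictConvexOn.add_mul_sub_lt_of_hasDerivAt {S : Set ℝ} {f : ℝ → ℝ} {f' x y : ℝ}
    (hf : StrictConvexOn ℝ S f) (hx : x ∈ S) (hy : y ∈ S) (hfd : HasDerivAt f f' x)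
    (hxy : y ≠ x) : f x + f' * (y - x) < f y := by
  rcases hxy.lt_or_gt with h | h
  · have := hf.slope_lt_of_hasDerivAt hy hx h hfd
    rw [slope_def_field, div_lt_iff₀ (by linarith)] at this
    nlinarith
  · have := hf.lt_slope_of_hasDerivAt hx hy h hfd
    rw [slope_def_field, lt_div_iff₀ (by linarith)] at this
    nlinarith

section LogisticRegression

variable {ι m : Type*} [Fintype ι] [Fintype m]

noncomputable def logisticLoss (A : Matrix ι m ℝ) (y : ι → ℝ) (θ : m → ℝ) : ℝ :=
  ∑ i, (softplus ((A *ᵥ θ) i) - y i * (A *ᵥ θ) i)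

theorem logisticLoss_lt_of_score_eq_zero {A : Matrix ι m ℝ} {y : ι → ℝ} {θ₀ θ : m → ℝ}
    (hscore : Aᵀ *ᵥ (y - sigmoid ∘ (A *ᵥ θ₀)) = 0) (hA : Function.Injective A.mulVec)
    (hθ : θ ≠ θ₀) : logisticLoss A y θ₀ < logisticLoss A y θ := by
  set s := A *ᵥ θ
  set s₀ := A *ᵥ θ₀
  have horth : ∑ i, (y i - sigmoid (s₀ i)) * (s i - s₀ i) = 0 := by
    have : (y - sigmoid ∘ s₀) ⬝ᵥ (A *ᵥ (θ - θ₀)) = 0 := by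
      rw [dotProduct_mulVec, ← mulVec_transpose, hscore, zero_dotProduct]
    simpa [dotProduct, mulVec_sub] using this
  obtain ⟨i₀, hi₀⟩ := Function.ne_iff.1 (hA.ne hθ)
  have htangent (i : ι) (hi : s i ≠ s₀ i) :
      softplus (s₀ i) + sigmoid (s₀ i) * (s i - s₀ i) < softplus (s i) :=
    strictConvexOn_softplus.add_mul_sub_lt_of_hasDerivAt (mem_univ _) (mem_univ _)
      (hasDerivAt_softplus _) hi
  show ∑ i, (softplus (s₀ i) - y i * s₀ i) < ∑ i, (softplus (s i) - y i * s i)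
  calc ∑ i, (softplus (s₀ i) - y i * s₀ i)
      = ∑ i, (softplus (s₀ i) + sigmoid (s₀ i) * (s i - s₀ i) - y i * s i) := by
        rw [← sub_eq_zero, ← horth, ← Finset.sum_sub_distrib]
        exact Finset.sum_congr rfl fun i _ => by ring
    _ < ∑ i, (softplus (s i) - y i * s i) := by
        refine Finset.sum_lt_sum (fun i _ => ?_)
          ⟨i₀, Finset.mem_univ _, by linarith [htangent i₀ hi₀]⟩
        by_cases hi : s i = s₀ i
        · simp [hi]
        · linarith [htangent i hi]

end LogisticRegression

namespace Matrix

theorem mulVec_injective_of_isUnit_transpose_mul {K n m : Type*} [Field K] [Fintype n]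
    [Fintype m] [DecidableEq m] {A : Matrix n m K} (hA : IsUnit (Aᵀ * A)) :
    Function.Injective A.mulVec := by
  refine Function.Injective.of_comp (f := (Aᵀ).mulVec) ?_
  simpa only [Function.comp_def, mulVec_mulVec] using mulVec_injective_iff_isUnit.2 hA

variable {R ι : Type*} [CommSemiring R]

def interceptDesign {p : ℕ} (X : Matrix ι (Fin p) R) : Matrix ι (Fin (p + 1)) R :=
  of fun i => Fin.cons 1 (X i)

theorem interceptDesign_mulVec_cons {p : ℕ} (X : Matrix ι (Fin p) R) (β₀ : R) (β : Fin p → R) :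
    interceptDesign X *ᵥ Fin.cons β₀ β = fun i => β₀ + (X *ᵥ β) i := by
  ext i
  simp [interceptDesign, mulVec, dotProduct, Fin.sum_univ_succ]

theorem transpose_interceptDesign_mulVec [Fintype ι] {p : ℕ} (X : Matrix ι (Fin p) R) (r : ι → R) :
    (interceptDesign X)ᵀ *ᵥ r = Fin.cons (∑ i, r i) (Xᵀ *ᵥ r) := by
  ext j
  refine Fin.cases ?_ (fun j => ?_) j <;>
    simp [interceptDesign, mulVec, dotProduct, mul_comm]

theorem transpose_sub_smul_ones_mul_mulVec {R m : Type*} [CommRing R] [Fintype ι]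
    (X : Matrix ι m R) (c : R) (y : ι → R) :
    (X - c • ((of fun _ _ => 1 : Matrix ι ι R) * X))ᵀ *ᵥ y = Xᵀ *ᵥ (y - fun _ => c * ∑ i, y i) := by
  ext j
  simp only [mulVec, dotProduct, transpose_apply, sub_apply, smul_apply, smul_eq_mul, mul_apply,
    of_apply, one_mul, Pi.sub_apply, sub_mul, mul_sub, Finset.sum_sub_distrib, ← Finset.sum_mul,
    ← Finset.mul_sum]
  ring

end Matrix

/-- Corollary 1 (logistic case): if `γ^c` satisfies the centered constraint
`‖(X − n⁻¹ 1 1ᵀ X)ᵀ σ(Zγ^c)‖₂² = 0`, then for `ŷ^c = σ(Zγ^c)` with mean `ȳ^c`,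
the logistic evaluation model with intercept has its unique global minimizer at
`(β₀, β) = (log(ȳ^c/(1−ȳ^c)), 0)`. -/
theorem corollary1_logistic
    (n p q : ℕ)
    (Z : Matrix (Fin n) (Fin q) ℝ) (X : Matrix (Fin n) (Fin p) ℝ)
    (A : Matrix (Fin n) (Fin (p + 1)) ℝ)
    (hA_def : A = Matrix.of fun i j =>
      Fin.cases (motive := fun _ => ℝ) 1 (fun j' => X i j') j)
    (hA : IsUnit (Aᵀ * A))
    (γc : Fin q → ℝ)
    (σ : ℝ → ℝ) (hσ : σ = fun t => 1 / (1 + Real.exp (-t)))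
    (yc : Fin n → ℝ) (hyc : yc = fun i => σ (Z.mulVec γc i))
    (Xc : Matrix (Fin n) (Fin p) ℝ)
    (hXc : Xc = X - (n : ℝ)⁻¹ • ((Matrix.of fun _ _ => (1 : ℝ)) * X))
    (hconstr : ∑ j, (Xcᵀ.mulVec yc j) ^ 2 = 0)
    (ybar : ℝ) (hybar : ybar = (n : ℝ)⁻¹ * ∑ i, yc i)
    (L : ℝ → (Fin p → ℝ) → ℝ)
    (hL : L = fun β₀ β => ∑ i,
      (Real.log (1 + Real.exp (β₀ + X.mulVec β i)) - yc i * (β₀ + X.mulVec β i))) :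
    (0 < ybar ∧ ybar < 1) ∧
      ∀ β₀ : ℝ, ∀ β : Fin p → ℝ,
        (β₀, β) ≠ (Real.log (ybar / (1 - ybar)), (0 : Fin p → ℝ)) →
          L (Real.log (ybar / (1 - ybar))) 0 < L β₀ β := by
  obtain rfl : σ = sigmoid := hσ.trans (funext fun t => one_div _)
  obtain rfl : A = interceptDesign X := hA_def
  subst hXc
  have hinj := mulVec_injective_of_isUnit_transpose_mul hA
  have hn : n ≠ 0 := by
    rintro rfl
    exact not_subsingleton _ hinj.subsingleton
  have hmean : ybar ∈ Ioo 0 1 := by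
    rw [hybar, Finset.mul_sum]
    refine (convex_Ioo 0 1).sum_mem (w := fun _ => (n : ℝ)⁻¹) (fun _ _ => by positivity)
      (by simp [hn]) fun i _ => ?_
    exact hyc ▸ ⟨sigmoid_pos _, sigmoid_lt_one _⟩
  have hcentered : Xᵀ *ᵥ (yc - fun _ => ybar) = 0 := by
    have h := (Fintype.sum_eq_zero_iff_of_nonneg fun j => sq_nonneg _).1 hconstr
    rw [hybar, ← transpose_sub_smul_ones_mul_mulVec]
    exact funext fun j => (pow_eq_zero_iff two_ne_zero).1 (congrFun h j)
  have hsum : ∑ i, (yc i - ybar) = 0 := by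
    rw [Finset.sum_sub_distrib, hybar]
    simp [hn]
  have hscore : (interceptDesign X)ᵀ *ᵥ
      (yc - sigmoid ∘ (interceptDesign X *ᵥ Fin.cons (log (ybar / (1 - ybar))) 0)) = 0 := by
    rw [interceptDesign_mulVec_cons, transpose_interceptDesign_mulVec]
    simp only [mulVec_zero, Pi.zero_apply, add_zero, Function.comp_def,
      sigmoid_log_div_one_sub hmean.1 hmean.2, hcentered, Pi.sub_apply, hsum]
    exact Matrix.cons_zero_zero
  have hL' (β₀ : ℝ) (β : Fin p → ℝ) :
      L β₀ β = logisticLoss (interceptDesign X) yc (Fin.cons β₀ β) := by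
    rw [hL, logisticLoss, interceptDesign_mulVec_cons]
    rfl
  refine ⟨hmean, fun β₀ β hne => ?_⟩
  rw [hL', hL']
  exact logisticLoss_lt_of_score_eq_zero hscore hinj (by simpa [Fin.cons_inj] using hne)
end

section
/- (Corollary 1, Poisson case.) Let Z ∈ ℝ^{n×q}, X ∈ ℝ^{n×p}, and suppose the n×(p+1) matrix [1_n | X] obtained by prepending a column of ones to X has full column rank. Let γ^c ∈ ℝ^q satisfy the constraint ‖(X − n⁻¹ 1_n 1_nᵀ X)ᵀ exp(Zγ^c)‖₂² = 0, and set ŷ^c = exp(Zγ^c) (exponential applied entrywise), with mean ȳ^c = n⁻¹ Σᵢ ŷᵢ^c > 0. Then the unique global minimizer (β̂₀, β̂) of the Poisson evaluation objective with intercept, (β₀, β) ↦ Σᵢ [exp(β₀ + xᵢᵀβ) − ŷᵢ^c (β₀ + xᵢᵀβ)], satisfies β̂ = 0 (and β̂₀ = log ȳ^c); i.e., the constrained optimization produces corrected coefficients with β̂^c = 0. -/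
/-!
By convexity of `exp`, `exp η ≥ ȳ (1 + η - log ȳ)` with equality only at `η = log ȳ`; hence each
summand `exp ηᵢ - yᵢ ηᵢ` of the objective exceeds its value at the constant fit `ηᵢ = log ȳ` by at
least `(ȳ - yᵢ)(ηᵢ - log ȳ)`. The residuals `y - ȳ 1` sum to zero, and the centering constraint
says they are orthogonal to the columns of `X`; so they are orthogonal to every linear predictor
`η = β₀ 1 + X β`, and the lower bound sums to zero. It is strict unless `η ≡ log ȳ`, which by
full column rank of `[1 | X]` forces `(β₀, β) = (log ȳ, 0)`.
-/

open Matrix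

open Finset Real

theorem exp_mul_sub_add_one_le_exp (c x : ℝ) : exp c * (x - c + 1) ≤ exp x := by
  calc exp c * (x - c + 1) ≤ exp c * exp (x - c) := by gcongr; exact add_one_le_exp _
    _ = exp x := by rw [← exp_add, add_sub_cancel]

theorem exp_mul_sub_add_one_lt_exp {c x : ℝ} (h : x ≠ c) : exp c * (x - c + 1) < exp x := by
  calc exp c * (x - c + 1) < exp c * exp (x - c) := by
        gcongr; exact add_one_lt_exp (sub_ne_zero.mpr h)
    _ = exp x := by rw [← exp_add, add_sub_cancel]

theorem sum_exp_sub_mul_lt_of_orthogonal {ι : Type*} [Fintype ι] {y η : ι → ℝ} {c : ℝ}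
    (horth : ∑ i, (y i - exp c) * (η i - c) = 0) (hη : ∃ i, η i ≠ c) :
    ∑ i, (exp c - y i * c) < ∑ i, (exp (η i) - y i * η i) := by
  have tangent (i : ι) :
      exp c - y i * c ≤ exp (η i) - y i * η i + (y i - exp c) * (η i - c) := by
    nlinarith [exp_mul_sub_add_one_le_exp c (η i)]
  obtain ⟨i₀, hi₀⟩ := hη
  calc ∑ i, (exp c - y i * c)
      < ∑ i, (exp (η i) - y i * η i + (y i - exp c) * (η i - c)) := by
        refine sum_lt_sum (fun i _ => tangent i) ⟨i₀, mem_univ _, ?_⟩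
        nlinarith [exp_mul_sub_add_one_lt_exp hi₀]
    _ = ∑ i, (exp (η i) - y i * η i) := by rw [sum_add_distrib, horth, add_zero]

theorem Matrix.mulVec_injective_of_isUnit_transpose_mul_s5 {m n K : Type*} [Field K]
    [Fintype m] [Fintype n] [DecidableEq n] {A : Matrix m n K} (hA : IsUnit (Aᵀ * A)) :
    Function.Injective A.mulVec := by
  rw [← mulVec_injective_iff_isUnit] at hA
  refine Function.Injective.of_comp (f := Aᵀ.mulVec) ?_
  convert hA using 1
  ext v : 1
  simp [mulVec_mulVec]

/-- The design matrix `[1 | X]` of a model with intercept. -/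
def Matrix.withInterceptColumn {m R : Type*} [One R] {p : ℕ} (X : Matrix m (Fin p) R) :
    Matrix m (Fin (p + 1)) R :=
  of fun i j => Fin.cases (motive := fun _ => R) 1 (fun j' => X i j') j

theorem Matrix.withInterceptColumn_mulVec_cons {m R : Type*} [Semiring R] {p : ℕ}
    (X : Matrix m (Fin p) R) (b : R) (β : Fin p → R) :
    X.withInterceptColumn *ᵥ Fin.cons b β = fun i => b + (X *ᵥ β) i := by
  ext i
  simp [withInterceptColumn, mulVec, dotProduct, Fin.sum_univ_succ]

theorem Matrix.centered_transpose_mulVec {R ι : Type*} [Field R] [Fintype ι] {n : ℕ}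
    (X : Matrix (Fin n) ι R) (y : Fin n → R) :
    (X - (n : R)⁻¹ • ((of fun _ _ => (1 : R)) * X))ᵀ *ᵥ y
      = Xᵀ *ᵥ (y - fun _ => (n : R)⁻¹ * ∑ i, y i) := by
  -- `of _ * X` elaborates with `CStarMatrix`'s multiplication, which `Matrix.mul_apply` misses.
  have hcolsum (i : Fin n) (j : ι) :
      ((of fun _ _ => (1 : R)) * X : Matrix (Fin n) ι R) i j = ∑ k, X k j :=
    Fintype.sum_congr _ _ fun k => one_mul (X k j)
  ext j
  simp only [mulVec, dotProduct, transpose_apply, sub_apply, smul_apply, smul_eq_mul, hcolsum,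
    Pi.sub_apply, sub_mul, mul_sub, sum_sub_distrib, mul_sum]
  congr 1
  simp only [sum_mul]
  rw [sum_comm]
  exact Fintype.sum_congr _ _ fun a => Fintype.sum_congr _ _ fun b => by ring

theorem sum_mul_add_mulVec_eq_zero {R ι κ : Type*} [CommSemiring R] [Fintype ι] [Fintype κ]
    {w : ι → R} {X : Matrix ι κ R} (hw : ∑ i, w i = 0) (hX : Xᵀ *ᵥ w = 0) (b : R) (β : κ → R) :
    ∑ i, w i * (b + (X *ᵥ β) i) = 0 := by
  have : ∑ i, w i * (X *ᵥ β) i = 0 := by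
    rw [← dotProduct, dotProduct_mulVec, ← mulVec_transpose, hX, zero_dotProduct]
  simp only [mul_add, sum_add_distrib, ← sum_mul, hw, zero_mul, this, add_zero]

/-- Corollary 1 (Poisson case): if `γ^c` satisfies the centered constraint
`‖(X − n⁻¹ 1 1ᵀ X)ᵀ exp(Zγ^c)‖₂² = 0`, then for `ŷ^c = exp(Zγ^c)` with mean
`ȳ^c`, the Poisson evaluation model with intercept has its unique global
minimizer at `(β₀, β) = (log ȳ^c, 0)`. -/
theorem corollary1_poisson
    (n p q : ℕ)
    (Z : Matrix (Fin n) (Fin q) ℝ) (X : Matrix (Fin n) (Fin p) ℝ)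
    (A : Matrix (Fin n) (Fin (p + 1)) ℝ)
    (hA_def : A = Matrix.of fun i j =>
      Fin.cases (motive := fun _ => ℝ) 1 (fun j' => X i j') j)
    (hA : IsUnit (Aᵀ * A))
    (γc : Fin q → ℝ)
    (yc : Fin n → ℝ) (hyc : yc = fun i => Real.exp (Z.mulVec γc i))
    (Xc : Matrix (Fin n) (Fin p) ℝ)
    (hXc : Xc = X - (n : ℝ)⁻¹ • ((Matrix.of fun _ _ => (1 : ℝ)) * X))
    (hconstr : ∑ j, (Xcᵀ.mulVec yc j) ^ 2 = 0)
    (ybar : ℝ) (hybar : ybar = (n : ℝ)⁻¹ * ∑ i, yc i)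
    (L : ℝ → (Fin p → ℝ) → ℝ)
    (hL : L = fun β₀ β => ∑ i,
      (Real.exp (β₀ + X.mulVec β i) - yc i * (β₀ + X.mulVec β i))) :
    0 < ybar ∧
      ∀ β₀ : ℝ, ∀ β : Fin p → ℝ,
        (β₀, β) ≠ (Real.log ybar, (0 : Fin p → ℝ)) →
          L (Real.log ybar) 0 < L β₀ β := by
  have hinj : Function.Injective A.mulVec := mulVec_injective_of_isUnit_transpose_mul_s5 hA
  have hn : n ≠ 0 := by
    rintro rfl
    exact not_subsingleton (Fin (p + 1) → ℝ) hinj.subsingleton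
  have : Nonempty (Fin n) := Fin.pos_iff_nonempty.mp (Nat.pos_of_ne_zero hn)
  have hybar_pos : 0 < ybar := by
    rw [hybar, hyc]
    have := sum_pos (fun i _ => exp_pos (Z.mulVec γc i)) univ_nonempty
    positivity
  have hexp : exp (log ybar) = ybar := exp_log hybar_pos
  have hres_sum : ∑ i, (yc i - ybar) = 0 := by
    rw [sum_sub_distrib, sum_const, card_univ, Fintype.card_fin, nsmul_eq_mul, hybar,
      mul_inv_cancel_left₀ (Nat.cast_ne_zero.mpr hn), sub_self]
  have hres_X : Xᵀ *ᵥ (yc - fun _ => ybar) = 0 := by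
    rw [hybar, ← centered_transpose_mulVec, ← hXc, ← dotProduct_self_eq_zero]
    simpa [dotProduct, sq] using hconstr
  refine ⟨hybar_pos, fun β₀ β hne => ?_⟩
  rw [hL]
  simp only [mulVec_zero, Pi.zero_apply, add_zero]
  refine sum_exp_sub_mul_lt_of_orthogonal ?_ ?_
  · rw [hexp]
    simpa only [add_sub_right_comm] using
      sum_mul_add_mulVec_eq_zero hres_sum hres_X (β₀ - log ybar) β
  · by_contra! hconst
    refine hne (Prod.ext_iff.mpr (Fin.cons_inj.mp (hinj ?_)))
    rw [show A = X.withInterceptColumn from hA_def, withInterceptColumn_mulVec_cons,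
      withInterceptColumn_mulVec_cons, mulVec_zero]
    exact funext fun i => by simpa using hconst i
end
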